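/- arXiv:1903.11152 — 2 statements merged into one kernel-verified Lean document; each statement's English description precedes it below -/
import Mathlib

section
/- Let c > 0, let α, α' be Borel probability measures on 𝕋^d × U with finite second moments, and let η be a Borel probability measure on 𝕋^d × U × B_c (B_c the closed ball of radius c in ℝ^d) whose marginal on 𝕋^d × U equals α. For τ, θ > 0 define Ξ^τ(x,u,w) := (x + τw, u). Let π be an optimal W₂-plan between α' and α and set η' := π∗η. Then W₂(Ξ^τ_#η, Ξ^θ_#η') ≤ W₂(α,α') + |τ − θ|·c. -/
noncomputable def intLattice (d : ℕ) : AddSubgroup (EuclideanSpace ℝ (Fin d)) where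
  carrier := {v | ∀ i, ∃ n : ℤ, v i = (n : ℝ)}
  zero_mem' := fun i => ⟨0, by simp⟩
  add_mem' := by
    intro a b ha hb i
    obtain ⟨n, hn⟩ := ha i
    obtain ⟨m, hm⟩ := hb i
    exact ⟨n + m, by simp [hn, hm]⟩
  neg_mem' := by
    intro a ha i
    obtain ⟨n, hn⟩ := ha i
    exact ⟨-n, by simp [hn]⟩

instance intLattice_isClosed (d : ℕ) :
    IsClosed ((intLattice d : Set (EuclideanSpace ℝ (Fin d)))) := by
  have h : (intLattice d : Set (EuclideanSpace ℝ (Fin d))) =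
      ⋂ i, (fun v : EuclideanSpace ℝ (Fin d) => v i) ⁻¹' (Set.range ((↑) : ℤ → ℝ)) := by
    ext v
    simp only [Set.mem_iInter, Set.mem_preimage, Set.mem_range]
    constructor
    · intro hv i; obtain ⟨n, hn⟩ := hv i; exact ⟨n, hn.symm⟩
    · intro hv i; obtain ⟨n, hn⟩ := hv i; exact ⟨n, hn.symm⟩
  rw [h]
  exact isClosed_iInter fun i =>
    (Int.isClosedEmbedding_coe_real.isClosed_range).preimage
      (by first | fun_prop | exact (EuclideanSpace.proj i).continuous)

/-- The `d`-dimensional torus `𝕋^d = ℝ^d/ℤ^d`, with the quotient (flat) metric. -/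
abbrev Torus (d : ℕ) := EuclideanSpace ℝ (Fin d) ⧸ intLattice d

noncomputable instance (d : ℕ) : MeasurableSpace (Torus d) := borel _
instance (d : ℕ) : BorelSpace (Torus d) := ⟨rfl⟩

open MeasureTheory ProbabilityTheory

/-- The `2`-Wasserstein distance between two Borel measures. -/
noncomputable def W2 {X : Type*} [MeasurableSpace X] [PseudoMetricSpace X]
    (μ ν : Measure X) : ℝ :=
  Real.sqrt (sInf {r : ℝ | ∃ π : Measure (X × X),
    π.fst = μ ∧ π.snd = ν ∧ r = ∫ p, dist p.1 p.2 ^ 2 ∂π})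

/-- The shift operator `Ξ^τ(x,u,w) := (x + τw, u)`. -/
noncomputable def Xi {d : ℕ} {U : Type*} (τ : ℝ) :
    (Torus d × U) × EuclideanSpace ℝ (Fin d) → Torus d × U :=
  fun q => (q.1.1 + QuotientAddGroup.mk (τ • q.2), q.1.2)

/-!
Glue the optimal plan `π` with the kernel `κ` along its second coordinate: under `π ⊗ κ` the point
`((x', u'), (x, u), w)` is sent to `(Ξ^τ(x, u, w), Ξ^θ(x', u', w))`, which gives a coupling of
`Ξ^τ_# η` and `Ξ^θ_# η'`. Both points are translated by the same `w`, so their distance is at most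
`d((x, u), (x', u')) + |τ - θ| c`, and Minkowski's inequality in `L²(π)` bounds the cost of this
coupling by `(W₂(α, α') + |τ - θ| c)²`. Compactness of `𝕋^d × U` keeps every integrand bounded.
-/

instance Torus.compactSpace (d : ℕ) : CompactSpace (Torus d) := by
  let proj : (Fin d → ℝ) → Torus d := fun v => QuotientAddGroup.mk (WithLp.toLp 2 v)
  have hproj : Continuous proj := continuous_quotient_mk'.comp (PiLp.continuous_toLp 2 _)
  refine ⟨((isCompact_Icc (a := 0) (b := 1)).image hproj).of_isClosed_subset isClosed_univ ?_⟩
  rintro x -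
  obtain ⟨v, rfl⟩ := QuotientAddGroup.mk_surjective x
  refine ⟨fun i => Int.fract (v i),
    ⟨fun i => Int.fract_nonneg _, fun i => (Int.fract_lt_one _).le⟩, ?_⟩
  refine QuotientAddGroup.eq.mpr fun i => ⟨⌊v i⌋, ?_⟩
  simp only [PiLp.add_apply, PiLp.neg_apply]
  rw [Int.fract]; ring

section Wasserstein

variable {X : Type*} [MeasurableSpace X] [PseudoMetricSpace X]

theorem W2_comm (μ ν : Measure X) : W2 μ ν = W2 ν μ := by
  have swap : ∀ {μ ν : Measure X} {r : ℝ}, (∃ π : Measure (X × X), π.fst = μ ∧ π.snd = ν ∧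
      r = ∫ p, dist p.1 p.2 ^ 2 ∂π) → ∃ π : Measure (X × X), π.fst = ν ∧ π.snd = μ ∧
      r = ∫ p, dist p.1 p.2 ^ 2 ∂π := by
    rintro μ ν _ ⟨π, h1, h2, rfl⟩
    refine ⟨π.map Prod.swap, by simpa using h2, by simpa using h1, ?_⟩
    rw [show (Prod.swap : X × X → X × X) = MeasurableEquiv.prodComm from rfl, integral_map_equiv]
    exact integral_congr_ae (ae_of_all _ fun p => congrArg (· ^ 2) (dist_comm p.1 p.2))
  unfold W2
  congr 2
  ext r
  exact ⟨swap, swap⟩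

theorem W2_le_sqrt_integral {μ ν : Measure X} {π : Measure (X × X)}
    (h1 : π.fst = μ) (h2 : π.snd = ν) :
    W2 μ ν ≤ Real.sqrt (∫ p, dist p.1 p.2 ^ 2 ∂π) :=
  Real.sqrt_le_sqrt <| csInf_le ⟨0, by rintro _ ⟨σ, -, -, rfl⟩; positivity⟩ ⟨π, h1, h2, rfl⟩

theorem sqrt_integral_le_W2_of_isOptimal {μ ν : Measure X} [IsProbabilityMeasure μ]
    {π : Measure (X × X)} (h1 : π.fst = μ) (h2 : π.snd = ν)
    (hopt : ∀ π' : Measure (X × X), IsProbabilityMeasure π' → π'.fst = μ → π'.snd = ν →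
      ∫ p, dist p.1 p.2 ^ 2 ∂π ≤ ∫ p, dist p.1 p.2 ^ 2 ∂π') :
    Real.sqrt (∫ p, dist p.1 p.2 ^ 2 ∂π) ≤ W2 μ ν := by
  refine Real.sqrt_le_sqrt <| le_csInf ⟨_, π, h1, h2, rfl⟩ ?_
  rintro _ ⟨π', h1', h2', rfl⟩
  have : IsProbabilityMeasure π' := ⟨by rw [← Measure.fst_univ, h1', measure_univ]⟩
  exact hopt π' this h1' h2'

end Wasserstein

theorem integral_add_const_sq_le {Ω : Type*} [MeasurableSpace Ω] {μ : Measure Ω}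
    [IsProbabilityMeasure μ] {f : Ω → ℝ} (hf : MemLp f 2 μ) {M : ℝ} (hM : 0 ≤ M) :
    ∫ ω, (f ω + M) ^ 2 ∂μ ≤ (Real.sqrt (∫ ω, f ω ^ 2 ∂μ) + M) ^ 2 := by
  have hf1 : Integrable f μ := hf.integrable one_le_two
  have hf2 : Integrable (fun ω => f ω ^ 2) μ := hf.integrable_sq
  have hexpand : ∫ ω, (f ω + M) ^ 2 ∂μ = ∫ ω, f ω ^ 2 ∂μ + 2 * M * ∫ ω, f ω ∂μ + M ^ 2 := by
    have hlin : Integrable (fun ω => 2 * f ω * M) μ := (hf1.const_mul 2).mul_const M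
    have hquad : Integrable (fun ω => f ω ^ 2 + 2 * f ω * M) μ := hf2.add hlin
    simp_rw [add_sq]
    rw [integral_add hquad (integrable_const _), integral_add hf2 hlin, integral_mul_const,
      integral_const_mul, integral_const, probReal_univ, one_smul]
    ring
  have hmean : ∫ ω, f ω ∂μ ≤ Real.sqrt (∫ ω, f ω ^ 2 ∂μ) := by
    have hvar := variance_nonneg f μ
    rw [variance_eq_sub hf] at hvar
    exact Real.le_sqrt_of_sq_le (by simpa using hvar)
  have hsq : Real.sqrt (∫ ω, f ω ^ 2 ∂μ) ^ 2 = ∫ ω, f ω ^ 2 ∂μ :=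
    Real.sq_sqrt (integral_nonneg fun ω => sq_nonneg _)
  rw [hexpand]
  nlinarith

theorem MeasureTheory.Measure.map_prodMap_compProd_comap {α β γ : Type*} [MeasurableSpace α]
    [MeasurableSpace β] [MeasurableSpace γ] (μ : Measure α) [SFinite μ] (κ : Kernel β γ)
    [IsSFiniteKernel κ] {f : α → β} (hf : Measurable f) :
    (μ.compProd (κ.comap f hf)).map (Prod.map f id) = (μ.map f).compProd κ := by
  ext s hs
  rw [Measure.map_apply (hf.prodMap measurable_id) hs,
    Measure.compProd_apply (measurableSet_preimage (hf.prodMap measurable_id) hs),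
    Measure.compProd_apply hs, lintegral_map (κ.measurable_kernel_prodMk_left hs) hf]
  rfl

section Shift

variable {d : ℕ} {U : Type*}

@[fun_prop]
theorem continuous_Xi [TopologicalSpace U] (τ : ℝ) : Continuous (Xi (d := d) (U := U) τ) := by
  unfold Xi
  fun_prop

theorem dist_Xi_Xi_le [PseudoMetricSpace U] (τ θ : ℝ) (z z' : Torus d × U)
    (w : EuclideanSpace ℝ (Fin d)) :
    dist (Xi τ (z, w)) (Xi θ (z', w)) ≤ dist z z' + |τ - θ| * ‖w‖ := by
  have hshift : dist (QuotientAddGroup.mk (τ • w) : Torus d) (QuotientAddGroup.mk (θ • w)) ≤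
      |τ - θ| * ‖w‖ := by
    rw [dist_eq_norm, ← QuotientAddGroup.mk_sub, ← sub_smul]
    exact QuotientAddGroup.norm_mk_le_norm.trans (norm_smul _ _).le
  have hx := dist_add_add_le z.1 (QuotientAddGroup.mk (τ • w) : Torus d) z'.1
    (QuotientAddGroup.mk (θ • w))
  simp only [Xi, Prod.dist_eq]
  refine max_le (hx.trans (add_le_add (le_max_left _ _) hshift)) ?_
  exact (le_max_right _ _).trans (le_add_of_nonneg_right (by positivity))

theorem integral_dist_Xi_sq_le [PseudoMetricSpace U] [CompactSpace U] [MeasurableSpace U]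
    [BorelSpace U] (μ : Measure (((Torus d × U) × (Torus d × U)) × EuclideanSpace ℝ (Fin d)))
    [IsFiniteMeasure μ] {c : ℝ} (hμ : ∀ᵐ q ∂μ, ‖q.2‖ ≤ c) (τ θ : ℝ) :
    ∫ q, dist (Xi τ (q.1.2, q.2)) (Xi θ (q.1.1, q.2)) ^ 2 ∂μ ≤
      ∫ p, (dist p.1 p.2 + |τ - θ| * c) ^ 2 ∂μ.fst := by
  have hg : Continuous fun p : (Torus d × U) × (Torus d × U) =>
      (dist p.1 p.2 + |τ - θ| * c) ^ 2 := by fun_prop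
  rw [Measure.fst, integral_map measurable_fst.aemeasurable hg.aestronglyMeasurable]
  refine integral_mono_of_nonneg (ae_of_all _ fun _ => sq_nonneg _)
    (((BoundedContinuousFunction.mkOfCompact ⟨_, hg⟩).integrable _).comp_measurable
      measurable_fst) ?_
  filter_upwards [hμ] with q hq
  refine pow_le_pow_left₀ dist_nonneg ((dist_Xi_Xi_le τ θ q.1.2 q.1.1 q.2).trans ?_) 2
  rw [dist_comm]
  gcongr

end Shift

theorem stmt7_general {d : ℕ} {U : Type*} [MetricSpace U] [CompactSpace U]
    [MeasurableSpace U] [BorelSpace U]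
    (c : ℝ) (hc : 0 < c)
    (α α' : Measure (Torus d × U)) [IsProbabilityMeasure α']
    (η : Measure ((Torus d × U) × EuclideanSpace ℝ (Fin d)))
    (hηball : ∀ᵐ q ∂η, ‖q.2‖ ≤ c)
    (κ : Kernel (Torus d × U) (EuclideanSpace ℝ (Fin d))) [IsMarkovKernel κ]
    (hκ : α.compProd κ = η)
    (τ θ : ℝ)
    (π : Measure ((Torus d × U) × (Torus d × U))) [IsProbabilityMeasure π]
    (hπ1 : π.fst = α') (hπ2 : π.snd = α)
    (hπopt : ∀ π' : Measure ((Torus d × U) × (Torus d × U)),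
      IsProbabilityMeasure π' → π'.fst = α' → π'.snd = α →
      ∫ p, dist p.1 p.2 ^ 2 ∂π ≤ ∫ p, dist p.1 p.2 ^ 2 ∂π') :
    W2 (η.map (Xi τ))
        (((π.compProd (κ.comap Prod.snd measurable_snd)).map
            (fun q : ((Torus d × U) × (Torus d × U)) × EuclideanSpace ℝ (Fin d) =>
              (q.1.1, q.2))).map (Xi θ))
      ≤ W2 α α' + |τ - θ| * c := by
  set M := |τ - θ| * c
  set μ := π.compProd (κ.comap Prod.snd measurable_snd)
  have hμη : μ.map (Prod.map Prod.snd id) = η := by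
    rw [Measure.map_prodMap_compProd_comap, ← Measure.snd, hπ2, hκ]
  have hball : ∀ᵐ q ∂μ, ‖q.2‖ ≤ c :=
    ae_of_ae_map (by fun_prop) (hμη ▸ hηball)
  set σ := μ.map fun q => (Xi τ (q.1.2, q.2), Xi θ (q.1.1, q.2))
  have hσ1 : σ.fst = η.map (Xi τ) := by
    rw [Measure.fst_map_prodMk (by fun_prop), ← hμη, Measure.map_map (by fun_prop) (by fun_prop)]
    rfl
  have hσ2 : σ.snd = (μ.map fun q => (q.1.1, q.2)).map (Xi θ) := by
    rw [Measure.snd_map_prodMk (by fun_prop), Measure.map_map (by fun_prop) (by fun_prop)]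
    rfl
  have hdist : MemLp (fun p : (Torus d × U) × (Torus d × U) => dist p.1 p.2) 2 π :=
    ContinuousMap.memLp π ℝ ⟨_, by fun_prop⟩
  calc W2 (η.map (Xi τ)) ((μ.map fun q => (q.1.1, q.2)).map (Xi θ))
      ≤ Real.sqrt (∫ p, dist p.1 p.2 ^ 2 ∂σ) := W2_le_sqrt_integral hσ1 hσ2
    _ ≤ Real.sqrt (∫ p, (dist p.1 p.2 + M) ^ 2 ∂π) := by
      gcongr
      rw [integral_map (by fun_prop) (by fun_prop)]
      simpa [μ, Measure.fst_compProd] using integral_dist_Xi_sq_le μ hball τ θ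
    _ ≤ Real.sqrt ((Real.sqrt (∫ p, dist p.1 p.2 ^ 2 ∂π) + M) ^ 2) := by
      gcongr
      exact integral_add_const_sq_le hdist (by positivity)
    _ = Real.sqrt (∫ p, dist p.1 p.2 ^ 2 ∂π) + M := Real.sqrt_sq (by positivity)
    _ ≤ W2 α α' + M := by
      rw [W2_comm]
      gcongr
      exact sqrt_integral_le_W2_of_isOptimal hπ1 hπ2 hπopt

/-- Lemma on continuity of `Ξ`: Let `c > 0`, let `α, α'` be Borel probability
measures on `𝕋^d × U` with finite second moments, and `η` a probability on `𝕋^d × U × B_c`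
with marginal `α` on `𝕋^d × U`, disintegrated by a Markov kernel `κ` (i.e. `η = α ⊗ κ`).
Let `π` be an optimal `W₂`-plan between `α'` and `α` and `η' := π∗η` the composition.
Then for `τ, θ > 0`, `W₂(Ξ^τ_#η, Ξ^θ_#η') ≤ W₂(α,α') + |τ − θ|·c`. -/
theorem stmt7 {d : ℕ} {U : Type*} [MetricSpace U] [CompactSpace U]
    [MeasurableSpace U] [BorelSpace U]
    (c : ℝ) (hc : 0 < c)
    (α α' : Measure (Torus d × U)) [IsProbabilityMeasure α] [IsProbabilityMeasure α']
    (hα2 : ∀ z₀ : Torus d × U, ∫⁻ z, edist z z₀ ^ 2 ∂α < ⊤)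
    (hα'2 : ∀ z₀ : Torus d × U, ∫⁻ z, edist z z₀ ^ 2 ∂α' < ⊤)
    (η : Measure ((Torus d × U) × EuclideanSpace ℝ (Fin d))) [IsProbabilityMeasure η]
    (hηball : ∀ᵐ q ∂η, ‖q.2‖ ≤ c)
    (hηfst : η.fst = α)
    (κ : Kernel (Torus d × U) (EuclideanSpace ℝ (Fin d))) [IsMarkovKernel κ]
    (hκ : α.compProd κ = η)
    (τ θ : ℝ) (hτ : 0 < τ) (hθ : 0 < θ)
    (π : Measure ((Torus d × U) × (Torus d × U))) [IsProbabilityMeasure π]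
    (hπ1 : π.fst = α') (hπ2 : π.snd = α)
    (hπopt : ∀ π' : Measure ((Torus d × U) × (Torus d × U)),
      IsProbabilityMeasure π' → π'.fst = α' → π'.snd = α →
      ∫ p, dist p.1 p.2 ^ 2 ∂π ≤ ∫ p, dist p.1 p.2 ^ 2 ∂π') :
    W2 (η.map (Xi τ))
        (((π.compProd (κ.comap Prod.snd measurable_snd)).map
            (fun q : ((Torus d × U) × (Torus d × U)) × EuclideanSpace ℝ (Fin d) =>
              (q.1.1, q.2))).map (Xi θ))
      ≤ W2 α α' + |τ - θ| * c :=
  stmt7_general c hc α α' η hηball κ hκ τ θ π hπ1 hπ2 hπopt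
end

section
/- Let x : [s,r] → ℝ^d be absolutely continuous and F(t,x) a compact convex set depending measurably on t and continuously on x, uniformly bounded. Then ẋ(t) ∈ F(t, x(t)) for a.e. t ∈ [s,r] if and only if for all s ≤ t' ≤ t'' ≤ r, x(t'') − x(t') ∈ ∫_{t'}^{t''} F(t, x(t)) dt (Aumann integral). -/
/-!
If `ẋ(t) ∈ F(t, x(t))` a.e., then changing `ẋ` on a null set gives a selection of
`F(·, x(·))` with the same integrals. Conversely, fix a direction `w` and let `σ_w(t)` be the
support function of `F(t, x(t))` at `w`. It is measurable, being a countable supremum of the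
distance functions `t ↦ infDist p (F(t, x(t)))` over a dense sequence of `p`, and it is
bounded. Pairing `x(t'') - x(t') ∈ ∫ F` with `w` gives `∫_{t'}^{t''} (σ_w - ⟪w, ẋ⟫) ≥ 0` on
every subinterval, so `⟪w, ẋ(t)⟫ ≤ σ_w(t)` a.e. by Lebesgue differentiation. Taking `w` in a
countable dense set and separating points from the compact convex set `F(t, x(t))` by
Hahn–Banach then gives `ẋ(t) ∈ F(t, x(t))` a.e.
-/

open MeasureTheory

/-- The Aumann integral `∫_{t'}^{t''} G(t) dt` of a set-valued map: the set of values of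
interval integrals of integrable selections of `G`. -/
def aumann {E : Type*} [NormedAddCommGroup E] [NormedSpace ℝ E]
    (G : ℝ → Set E) (t' t'' : ℝ) : Set E :=
  {y | ∃ φ : ℝ → E, (∀ t ∈ Set.uIcc t' t'', φ t ∈ G t) ∧
    IntervalIntegrable φ volume t' t'' ∧ y = ∫ t in t'..t'', φ t}

open Set Metric Filter Topology
open scoped RealInnerProductSpace Interval

section SupportFunction

variable {E : Type*} [NormedAddCommGroup E] [InnerProductSpace ℝ E] {K : Set E} {w v : E}

/-- Only meaningful for nonempty bounded `K`: otherwise `sSup` returns a junk value. -/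
noncomputable def supportFn (K : Set E) (w : E) : ℝ :=
  sSup ((fun v => ⟪w, v⟫) '' K)

lemma le_supportFn (hK : IsCompact K) (hv : v ∈ K) : ⟪w, v⟫ ≤ supportFn K w :=
  le_csSup (hK.image (continuous_const.inner continuous_id)).bddAbove (mem_image_of_mem _ hv)

lemma supportFn_le (hne : K.Nonempty) {M : ℝ} (h : ∀ v ∈ K, ⟪w, v⟫ ≤ M) :
    supportFn K w ≤ M :=
  csSup_le (hne.image _) (forall_mem_image.2 h)

lemma continuous_supportFn (hK : IsCompact K) : Continuous (supportFn K) :=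
  hK.continuous_sSup (f := fun w v => ⟪w, v⟫) continuous_inner

lemma abs_supportFn_le (hK : IsCompact K) (hne : K.Nonempty) {c : ℝ}
    (hc : K ⊆ closedBall 0 c) (w : E) : |supportFn K w| ≤ c * ‖w‖ := by
  have hnorm : ∀ v ∈ K, |⟪w, v⟫| ≤ c * ‖w‖ := fun v hv => by
    have : ‖v‖ ≤ c := mem_closedBall_zero_iff.1 (hc hv)
    calc |⟪w, v⟫| ≤ ‖w‖ * ‖v‖ := abs_real_inner_le_norm w v
      _ ≤ c * ‖w‖ := by rw [mul_comm]; gcongr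
  obtain ⟨v, hv⟩ := hne
  refine abs_le.2 ⟨?_, supportFn_le ⟨v, hv⟩ fun v hv => (abs_le.1 (hnorm v hv)).2⟩
  exact (abs_le.1 (hnorm v hv)).1.trans (le_supportFn hK hv)

lemma inner_sub_mul_infDist_le_supportFn (hK : IsCompact K) (hne : K.Nonempty) (p : E) :
    ⟪w, p⟫ - ‖w‖ * infDist p K ≤ supportFn K w := by
  obtain ⟨v, hv, hpv⟩ := hK.exists_infDist_eq_dist hne p
  have : ⟪w, p - v⟫ ≤ ‖w‖ * ‖p - v‖ := real_inner_le_norm w (p - v)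
  rw [inner_sub_right, ← dist_eq_norm, ← hpv] at this
  linarith [le_supportFn (w := w) hK hv]

lemma supportFn_eq_iSup_infDist {u : ℕ → E} (hu : DenseRange u) (hK : IsCompact K)
    (hne : K.Nonempty) (w : E) :
    supportFn K w = ⨆ n, (⟪w, u n⟫ - ‖w‖ * infDist (u n) K) := by
  have hbdd : BddAbove (range fun n => ⟪w, u n⟫ - ‖w‖ * infDist (u n) K) :=
    ⟨supportFn K w, forall_mem_range.2 fun n => inner_sub_mul_infDist_le_supportFn hK hne _⟩
  refine le_antisymm (supportFn_le hne fun v hv => ?_)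
    (ciSup_le fun n => inner_sub_mul_infDist_le_supportFn hK hne _)
  have := hu.induction_on (p := fun p => ⟪w, p⟫ - ‖w‖ * infDist p K ≤ _) v
    (isClosed_le (by fun_prop) continuous_const) fun n => le_ciSup hbdd n
  simpa [infDist_zero_of_mem hv] using this

lemma mem_of_forall_inner_le_supportFn [CompleteSpace E] (hK : IsCompact K)
    (hconv : Convex ℝ K) (hne : K.Nonempty) {u : ℕ → E} (hu : DenseRange u)
    (h : ∀ n, ⟪u n, v⟫ ≤ supportFn K (u n)) : v ∈ K := by
  have hall : ∀ w, ⟪w, v⟫ ≤ supportFn K w := fun w =>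
    hu.induction_on w (isClosed_le (by fun_prop) (continuous_supportFn hK)) h
  by_contra hv
  obtain ⟨f, c, hfK, hcf⟩ := geometric_hahn_banach_closed_point hconv hK.isClosed hv
  set w₀ := (InnerProductSpace.toDual ℝ E).symm f
  have hw₀ : ∀ p, ⟪w₀, p⟫ = f p := fun _ => InnerProductSpace.toDual_symm_apply
  have hσ : supportFn K w₀ ≤ c := supportFn_le hne fun p hp => (hw₀ p).trans_le (hfK p hp).le
  linarith [hw₀ v ▸ hall w₀]

end SupportFunction

lemma aemeasurable_supportFn {α E : Type*} [MeasurableSpace α] {μ : Measure α}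
    [NormedAddCommGroup E] [InnerProductSpace ℝ E] [TopologicalSpace.SeparableSpace E]
    {G : α → Set E} (hG : ∀ a, IsCompact (G a)) (hne : ∀ a, (G a).Nonempty)
    (hmeas : ∀ p, AEMeasurable (fun a => infDist p (G a)) μ) (w : E) :
    AEMeasurable (fun a => supportFn (G a) w) μ := by
  have hu := TopologicalSpace.denseRange_denseSeq E
  simp_rw [supportFn_eq_iSup_infDist hu (hG _) (hne _)]
  exact AEMeasurable.iSup fun n => aemeasurable_const.sub ((hmeas _).const_mul _)

lemma aemeasurable_infDist_comp {α E : Type*} [MeasurableSpace α] {μ : Measure α}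
    [NormedAddCommGroup E] [SecondCountableTopology E] [MeasurableSpace E] [BorelSpace E]
    {F : α → E → Set E} (hFmeas : ∀ p z, Measurable fun a => infDist p (F a z))
    (hFcont : ∀ a p, Continuous fun z => infDist p (F a z)) {x : α → E} (hx : AEMeasurable x μ)
    (p : E) : AEMeasurable (fun a => infDist p (F a (x a))) μ := by
  have hjoint : Measurable (Function.uncurry fun z a => infDist p (F a z)) :=
    measurable_uncurry_of_continuous_of_measurable (fun a => hFcont a p) (hFmeas p)
  exact (hjoint.comp_aemeasurable (hx.prodMk aemeasurable_id) :)

lemma ae_nonneg_of_forall_intervalIntegral_nonneg {g : ℝ → ℝ} {a b : ℝ}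
    (hg : IntervalIntegrable g volume a b)
    (h : ∀ t' t'', a ≤ t' → t' ≤ t'' → t'' ≤ b → 0 ≤ ∫ t in t'..t'', g t) :
    ∀ᵐ t ∂volume.restrict (Icc a b), 0 ≤ g t := by
  have hsub : ∀ {t}, t ∈ Icc a b → IntervalIntegrable g volume a t := fun ht =>
    hg.mono_set (uIcc_subset_uIcc_left (Icc_subset_uIcc ht))
  -- `g` is a.e. the derivative of its primitive, which the hypothesis makes monotone.
  have hmono : MonotoneOn (fun y => ∫ t in a..y, g t) (Icc a b) := fun t' ht' t'' ht'' hle => by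
    rw [← sub_nonneg, intervalIntegral.integral_interval_sub_left (hsub ht'') (hsub ht')]
    exact h t' t'' ht'.1 hle ht''.2
  have hna : ∀ᵐ t ∂volume, t ≠ a := by simp [ae_iff, measure_singleton]
  have hnb : ∀ᵐ t ∂volume, t ≠ b := by simp [ae_iff, measure_singleton]
  rw [ae_restrict_iff' measurableSet_Icc]
  filter_upwards [hg.ae_hasDerivAt_integral, hna, hnb] with t hderiv hta htb ht
  have hab : a ≤ b := ht.1.trans ht.2
  have htIoo : t ∈ Ioo a b := ⟨ht.1.lt_of_ne' hta, ht.2.lt_of_ne htb⟩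
  have hacc : AccPt t (𝓟 (Icc a b)) := by
    rw [accPt_principal_iff_nhdsWithin]
    have := left_nhdsWithin_Ioo_neBot htIoo.2
    exact this.mono (nhdsWithin_mono _ fun y hy => ⟨⟨(htIoo.1.trans hy.1).le, hy.2.le⟩, hy.1.ne'⟩)
  rw [uIcc_of_le hab] at hderiv
  exact ((hderiv ht a (left_mem_Icc.2 hab)).hasDerivWithinAt).nonneg_of_monotoneOn hacc hmono

section Aumann

variable {E : Type*} [NormedAddCommGroup E] [NormedSpace ℝ E]

lemma intervalIntegral_mem_aumann {G : ℝ → Set E} (hG : ∀ t, (G t).Nonempty) {f : ℝ → E}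
    {a b : ℝ} (hf : IntervalIntegrable f volume a b) (hfG : ∀ᵐ t, t ∈ Ι a b → f t ∈ G t) :
    ∫ t in a..b, f t ∈ aumann G a b := by
  classical
  set φ : ℝ → E := fun t => if f t ∈ G t then f t else (hG t).some
  have hφG : ∀ t, φ t ∈ G t := fun t => by
    by_cases h : f t ∈ G t
    · simp [φ, h]
    · simpa [φ, h] using (hG t).some_mem
  have hfφ : ∀ᵐ t, t ∈ Ι a b → f t = φ t := by
    filter_upwards [hfG] with t ht htab
    simp [φ, ht htab]
  exact ⟨φ, fun t _ => hφG t, hf.congr_ae ((ae_restrict_iff' measurableSet_uIoc).2 hfφ),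
    intervalIntegral.integral_congr_ae hfφ⟩

end Aumann

section Primitive

variable {E : Type*} [NormedAddCommGroup E] [NormedSpace ℝ E] {s r : ℝ} {x xdot : ℝ → E}

lemma continuousOn_of_eq_add_integral (hxdot : IntervalIntegrable xdot volume s r)
    (hx : ∀ t ∈ Icc s r, x t = x s + ∫ τ in s..t, xdot τ) : ContinuousOn x (Icc s r) :=
  ((continuousOn_const.add (intervalIntegral.continuousOn_primitive_interval' hxdot
    left_mem_uIcc)).mono Icc_subset_uIcc).congr hx

lemma sub_eq_intervalIntegral_of_eq_add_integral (hxdot : IntervalIntegrable xdot volume s r)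
    (hx : ∀ t ∈ Icc s r, x t = x s + ∫ τ in s..t, xdot τ) {t' t'' : ℝ} (h1 : s ≤ t')
    (h2 : t' ≤ t'') (h3 : t'' ≤ r) : x t'' - x t' = ∫ t in t'..t'', xdot t := by
  have ht' : t' ∈ Icc s r := ⟨h1, h2.trans h3⟩
  have ht'' : t'' ∈ Icc s r := ⟨h1.trans h2, h3⟩
  rw [hx t'' ht'', hx t' ht', add_sub_add_left_eq_sub, intervalIntegral.integral_interval_sub_left
    (hxdot.mono_set (uIcc_subset_uIcc_left (Icc_subset_uIcc ht'')))
    (hxdot.mono_set (uIcc_subset_uIcc_left (Icc_subset_uIcc ht')))]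

lemma sub_mem_aumann_of_ae_mem (hxdot : IntervalIntegrable xdot volume s r)
    (hx : ∀ t ∈ Icc s r, x t = x s + ∫ τ in s..t, xdot τ) {G : ℝ → Set E}
    (hG : ∀ t, (G t).Nonempty) (hae : ∀ᵐ t ∂volume.restrict (Icc s r), xdot t ∈ G t)
    {t' t'' : ℝ} (h1 : s ≤ t') (h2 : t' ≤ t'') (h3 : t'' ≤ r) :
    x t'' - x t' ∈ aumann G t' t'' := by
  rw [sub_eq_intervalIntegral_of_eq_add_integral hxdot hx h1 h2 h3]
  have hsub : Icc t' t'' ⊆ Icc s r := Icc_subset_Icc h1 h3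
  refine intervalIntegral_mem_aumann hG (hxdot.mono_set ?_) ?_
  · simpa [uIcc_of_le h2, uIcc_of_le (h1.trans (h2.trans h3))] using hsub
  · rw [ae_restrict_iff' measurableSet_Icc] at hae
    filter_upwards [hae] with t ht htI
    exact ht (hsub (Ioc_subset_Icc_self (by rwa [uIoc_of_le h2] at htI)))

end Primitive

section Converse

variable {E : Type*} [NormedAddCommGroup E] [InnerProductSpace ℝ E] [CompleteSpace E]

lemma inner_le_integral_supportFn_of_mem_aumann {G : ℝ → Set E} {a b : ℝ} (hab : a ≤ b)
    (hG : ∀ t, IsCompact (G t)) {w y : E}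
    (hσ : IntervalIntegrable (fun t => supportFn (G t) w) volume a b)
    (hy : y ∈ aumann G a b) : ⟪w, y⟫ ≤ ∫ t in a..b, supportFn (G t) w := by
  obtain ⟨φ, hφG, hφ, rfl⟩ := hy
  have hcomm : ∫ t in a..b, ⟪w, φ t⟫ = ⟪w, ∫ t in a..b, φ t⟫ :=
    (innerSL ℝ w).intervalIntegral_comp_comm hφ
  rw [← hcomm]
  have hwφ : IntervalIntegrable (fun t => ⟪w, φ t⟫) volume a b :=
    ⟨(innerSL ℝ w).integrable_comp hφ.1, (innerSL ℝ w).integrable_comp hφ.2⟩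
  refine intervalIntegral.integral_mono_on hab hwφ hσ fun t ht => le_supportFn (hG t) (hφG t ?_)
  rwa [uIcc_of_le hab]

lemma ae_inner_le_supportFn_of_forall_sub_mem_aumann {s r : ℝ} (hsr : s ≤ r) {x xdot : ℝ → E}
    (hxdot : IntervalIntegrable xdot volume s r)
    (hx : ∀ t ∈ Icc s r, x t = x s + ∫ τ in s..t, xdot τ) {G : ℝ → Set E}
    (hG : ∀ t, IsCompact (G t)) {w : E}
    (hσ : IntegrableOn (fun t => supportFn (G t) w) (Icc s r))
    (H : ∀ t' t'', s ≤ t' → t' ≤ t'' → t'' ≤ r → x t'' - x t' ∈ aumann G t' t'') :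
    ∀ᵐ t ∂volume.restrict (Icc s r), ⟪w, xdot t⟫ ≤ supportFn (G t) w := by
  have hσ' : IntervalIntegrable (fun t => supportFn (G t) w) volume s r :=
    (uIcc_of_le hsr ▸ hσ).intervalIntegrable
  have hwx : IntervalIntegrable (fun t => ⟪w, xdot t⟫) volume s r :=
    ⟨(innerSL ℝ w).integrable_comp hxdot.1, (innerSL ℝ w).integrable_comp hxdot.2⟩
  refine (ae_nonneg_of_forall_intervalIntegral_nonneg (hσ'.sub hwx) fun t' t'' h1 h2 h3 => ?_).mono
    fun t ht => sub_nonneg.1 ht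
  have hsub : uIcc t' t'' ⊆ uIcc s r := by
    rw [uIcc_of_le h2, uIcc_of_le hsr]
    exact Icc_subset_Icc h1 h3
  have hcomm : ∫ t in t'..t'', ⟪w, xdot t⟫ = ⟪w, x t'' - x t'⟫ := by
    rw [sub_eq_intervalIntegral_of_eq_add_integral hxdot hx h1 h2 h3]
    exact (innerSL ℝ w).intervalIntegral_comp_comm (hxdot.mono_set hsub)
  rw [intervalIntegral.integral_sub (hσ'.mono_set hsub) (hwx.mono_set hsub), sub_nonneg, hcomm]
  exact inner_le_integral_supportFn_of_mem_aumann h2 hG (hσ'.mono_set hsub) (H t' t'' h1 h2 h3)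

lemma ae_mem_of_forall_sub_mem_aumann [SecondCountableTopology E] [MeasurableSpace E]
    [BorelSpace E] {s r : ℝ} (hsr : s ≤ r) {x xdot : ℝ → E}
    (hxdot : IntervalIntegrable xdot volume s r)
    (hx : ∀ t ∈ Icc s r, x t = x s + ∫ τ in s..t, xdot τ) {F : ℝ → E → Set E}
    (hFc : ∀ t y, IsCompact (F t y)) (hFconv : ∀ t y, Convex ℝ (F t y))
    (hFne : ∀ t y, (F t y).Nonempty) {c : ℝ} (hFbd : ∀ t y, F t y ⊆ closedBall 0 c)
    (hFmeas : ∀ w y, Measurable fun t => infDist w (F t y))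
    (hFcont : ∀ t w, Continuous fun y => infDist w (F t y))
    (H : ∀ t' t'', s ≤ t' → t' ≤ t'' → t'' ≤ r →
      x t'' - x t' ∈ aumann (fun t => F t (x t)) t' t'') :
    ∀ᵐ t ∂volume.restrict (Icc s r), xdot t ∈ F t (x t) := by
  have hxm : AEMeasurable x (volume.restrict (Icc s r)) :=
    (continuousOn_of_eq_add_integral hxdot hx).aemeasurable measurableSet_Icc
  have hσ (w : E) : IntegrableOn (fun t => supportFn (F t (x t)) w) (Icc s r) :=
    (integrable_const (c * ‖w‖)).mono'
      (aemeasurable_supportFn (fun t => hFc t (x t)) (fun t => hFne t (x t))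
        (aemeasurable_infDist_comp hFmeas hFcont hxm) w).aestronglyMeasurable
      (ae_of_all _ fun t => abs_supportFn_le (hFc _ _) (hFne _ _) (hFbd _ _) w)
  set u := TopologicalSpace.denseSeq E
  filter_upwards [ae_all_iff.2 fun n : ℕ => ae_inner_le_supportFn_of_forall_sub_mem_aumann hsr
    hxdot hx (fun t => hFc t (x t)) (hσ (u n)) H] with t ht
  exact mem_of_forall_inner_le_supportFn (hFc _ _) (hFconv _ _) (hFne _ _)
    (TopologicalSpace.denseRange_denseSeq E) ht

end Converse

/-- Let `x : [s,r] → ℝ^d` be absolutely continuous (i.e. `x(t) = x(s) + ∫_s^t ẋ`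
with `ẋ` integrable) and `F(t,x)` a nonempty compact convex set, measurable in `t`,
continuous in `x`, uniformly bounded.  Then `ẋ(t) ∈ F(t, x(t))` for a.e. `t ∈ [s,r]` iff
for all `s ≤ t' ≤ t'' ≤ r`, `x(t'') − x(t') ∈ ∫_{t'}^{t''} F(t, x(t)) dt` (Aumann integral). -/
theorem stmt14 {d : ℕ} (s r : ℝ) (hsr : s ≤ r)
    (x xdot : ℝ → EuclideanSpace ℝ (Fin d))
    (hxdot : IntervalIntegrable xdot volume s r)
    (hx : ∀ t ∈ Set.Icc s r, x t = x s + ∫ τ in s..t, xdot τ)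
    (F : ℝ → EuclideanSpace ℝ (Fin d) → Set (EuclideanSpace ℝ (Fin d)))
    (hFc : ∀ t y, IsCompact (F t y)) (hFconv : ∀ t y, Convex ℝ (F t y))
    (hFne : ∀ t y, (F t y).Nonempty)
    (hFbd : ∃ c : ℝ, ∀ t y, F t y ⊆ Metric.closedBall 0 c)
    (hFmeas : ∀ (w : EuclideanSpace ℝ (Fin d)) (y : EuclideanSpace ℝ (Fin d)),
      Measurable fun t => Metric.infDist w (F t y))
    (hFcont : ∀ (t : ℝ) (w : EuclideanSpace ℝ (Fin d)),
      Continuous fun y => Metric.infDist w (F t y)) :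
    (∀ᵐ t ∂(volume.restrict (Set.Icc s r)), xdot t ∈ F t (x t)) ↔
      (∀ t' t'' : ℝ, s ≤ t' → t' ≤ t'' → t'' ≤ r →
        x t'' - x t' ∈ aumann (fun t => F t (x t)) t' t'') := by
  obtain ⟨c, hc⟩ := hFbd
  exact ⟨fun hae t' t'' h1 h2 h3 =>
      sub_mem_aumann_of_ae_mem hxdot hx (fun t => hFne t (x t)) hae h1 h2 h3,
    ae_mem_of_forall_sub_mem_aumann hsr hxdot hx hFc hFconv hFne hc hFmeas hFcont⟩
end
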